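/- Let E be a real inner product space (e.g. ℝ^p with the Euclidean norm), let λ ≥ 0 and z ∈ E. Define the group soft-thresholding operator S(z, λ) = (1 − λ/‖z‖)₊ · z if z ≠ 0 and S(z, λ) = 0 if z = 0, where (t)₊ = max(t, 0). Then S(z, λ) is the unique minimizer of the function b ↦ (1/2)‖b − z‖² + λ‖b‖ over E; that is, for every b ∈ E, (1/2)‖S(z,λ) − z‖² + λ‖S(z,λ)‖ ≤ (1/2)‖b − z‖² + λ‖b‖, with equality only when b = S(z, λ). -/

import Mathlib

open RealInnerProductSpace


open Classical in
/-- The group soft-thresholding operator `S(z, λ) = (1 - λ/‖z‖)₊ • z` (and `0` at `z = 0`). -/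
noncomputable def groupSoftThreshold {E : Type*} [NormedAddCommGroup E]
    [InnerProductSpace ℝ E] (z : E) (lam : ℝ) : E :=
  if z = 0 then 0 else (max (1 - lam / ‖z‖) 0) • z

/-- In a real inner product space, the group soft-thresholding operator
`S(z, λ)` is the unique minimizer of `b ↦ (1/2) ‖b - z‖² + λ ‖b‖`: for every `b`,
`(1/2) ‖S(z,λ) - z‖² + λ ‖S(z,λ)‖ ≤ (1/2) ‖b - z‖² + λ ‖b‖`, with equality only when
`b = S(z, λ)`. -/
theorem groupSoftThreshold_isMinimizer {E : Type*} [NormedAddCommGroup E]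
    [InnerProductSpace ℝ E] (z : E) (lam : ℝ) (hlam : 0 ≤ lam) (b : E) :
    (1 / 2) * ‖groupSoftThreshold z lam - z‖ ^ 2 + lam * ‖groupSoftThreshold z lam‖ ≤
        (1 / 2) * ‖b - z‖ ^ 2 + lam * ‖b‖ ∧
      ((1 / 2) * ‖groupSoftThreshold z lam - z‖ ^ 2 + lam * ‖groupSoftThreshold z lam‖ =
          (1 / 2) * ‖b - z‖ ^ 2 + lam * ‖b‖ → b = groupSoftThreshold z lam) := by
  set s := groupSoftThreshold z lam with hs
  have key : 0 ≤ ⟪b - s, s - z⟫ + lam * ‖b‖ - lam * ‖s‖ := by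
    by_cases hz : z = 0
    · have : s = 0 := by simp [hs, groupSoftThreshold, hz]
      simp [this, hz]
      positivity
    · have hznorm : (0:ℝ) < ‖z‖ := norm_pos_iff.mpr hz
      have hcs : ⟪b, z⟫ ≤ ‖b‖ * ‖z‖ := real_inner_le_norm b z
      set c : ℝ := max (1 - lam / ‖z‖) 0 with hc
      have hseq : s = c • z := by simp [hs, groupSoftThreshold, hz, hc]
      have hc0 : 0 ≤ c := le_max_right _ _
      have hnorms : ‖s‖ = c * ‖z‖ := by
        rw [hseq, norm_smul, Real.norm_eq_abs, abs_of_nonneg hc0]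
      have hinner : ⟪b - s, s - z⟫ = (c - 1) * (⟪b, z⟫ - c * ‖z‖ ^ 2) := by
        have hsz : s - z = (c - 1) • z := by rw [hseq, sub_smul, one_smul]
        rw [hsz, real_inner_smul_right, hseq, inner_sub_left, real_inner_smul_left,
          real_inner_self_eq_norm_sq]
      rw [hinner, hnorms]
      by_cases hl : lam < ‖z‖
      · have hceq : c = 1 - lam / ‖z‖ := by
          rw [hc, max_eq_left]
          have : lam / ‖z‖ < 1 := (div_lt_one hznorm).mpr hl
          linarith
        rw [hceq]
        have h1 : (1 - lam / ‖z‖ - 1) = -(lam / ‖z‖) := by ring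
        have hz2 : ‖z‖ ≠ 0 := ne_of_gt hznorm
        field_simp
        rw [zero_mul]
        nlinarith [mul_nonneg (mul_nonneg hlam hznorm.le) (sub_nonneg.mpr hcs), mul_nonneg hlam (sub_nonneg.mpr hcs)]
      · have hceq : c = 0 := by
          rw [hc, max_eq_right]
          have : (1:ℝ) ≤ lam / ‖z‖ := (one_le_div hznorm).mpr (not_lt.mp hl)
          linarith
        rw [hceq]
        have : ‖b‖ * ‖z‖ ≤ lam * ‖b‖ := by
          calc ‖b‖ * ‖z‖ ≤ ‖b‖ * lam := by
                exact mul_le_mul_of_nonneg_left (not_lt.mp hl) (norm_nonneg b)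
            _ = lam * ‖b‖ := mul_comm _ _
        nlinarith
  have expand : ‖b - z‖ ^ 2 = ‖b - s‖ ^ 2 + 2 * ⟪b - s, s - z⟫ + ‖s - z‖ ^ 2 := by
    have h : b - z = (b - s) + (s - z) := by abel
    rw [h, norm_add_sq_real]
  constructor
  · nlinarith [sq_nonneg ‖b - s‖]
  · intro h
    have hbs : ‖b - s‖ ^ 2 ≤ 0 := by nlinarith
    have : ‖b - s‖ = 0 := by nlinarith [sq_nonneg ‖b - s‖, norm_nonneg (b - s)]
    have : b - s = 0 := norm_eq_zero.mp this
    rw [sub_eq_zero] at this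
    exact this
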